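/- arXiv:1112.6037 — 4 statements merged into one kernel-verified Lean document; each statement's English description precedes it below -/
import Mathlib

section
/- Let G be a Lie group with Lie algebra 𝔤 and τ: 𝔤 → G as above with right-trivialised differential dτ_ξ. Then for every ξ ∈ 𝔤 the coadjoint map satisfies Ad*_{τ(ξ)} = (dτ_{-ξ}^{-1})* ∘ (dτ_ξ)* as linear maps 𝔤* → 𝔤*. -/
open Matrix

attribute [local instance] Matrix.normedAddCommGroup Matrix.normedSpace

/-- The right-trivialised differential `dτ_ξ` as a linear map, for a matrix Lie group. -/
noncomputable def dtauL {n : ℕ} (τ : Matrix (Fin n) (Fin n) ℝ → Matrix (Fin n) (Fin n) ℝ)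
    (ξ : Matrix (Fin n) (Fin n) ℝ) :
    Matrix (Fin n) (Fin n) ℝ →ₗ[ℝ] Matrix (Fin n) (Fin n) ℝ :=
  (LinearMap.mulRight ℝ ((τ ξ)⁻¹)).comp (fderiv ℝ τ ξ).toLinearMap

/-- The adjoint action `Ad_g(η) = g η g⁻¹` as a linear map, for a matrix Lie group. -/
noncomputable def AdL {n : ℕ} (g : Matrix (Fin n) (Fin n) ℝ) :
    Matrix (Fin n) (Fin n) ℝ →ₗ[ℝ] Matrix (Fin n) (Fin n) ℝ :=
  (LinearMap.mulLeft ℝ g).comp (LinearMap.mulRight ℝ g⁻¹)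

/-!
Differentiating `τ (-η) * τ η = 1` at `ξ` gives `τ (-ξ) * τ'(ξ) v = τ'(-ξ) v * τ ξ`, which says
exactly that `Ad_{τ ξ} ∘ dτ_{-ξ} = dτ_ξ`. Hence `Ad_{τ ξ} = dτ_ξ ∘ dτ_{-ξ}⁻¹`, and dualising
reverses the order of composition.
-/

section MatrixCalculus

variable {𝕜 E : Type*} [NontriviallyNormedField 𝕜] [NormedAddCommGroup E] [NormedSpace 𝕜 E]

theorem fderiv_comp_neg_apply {F : Type*} [NormedAddCommGroup F] [NormedSpace 𝕜 F] {f : E → F}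
    {x : E} (hf : DifferentiableAt 𝕜 f (-x)) (v : E) :
    fderiv 𝕜 (fun y => f (-y)) x v = -fderiv 𝕜 f (-x) v := by
  have h := HasFDerivAt.comp (f := fun y => -y) x hf.hasFDerivAt (hasFDerivAt_id x).neg
  refine congr($(h.fderiv) v).trans ?_
  simp

variable [CompleteSpace 𝕜] {l m n : Type*} [Fintype l] [Fintype m] [Fintype n]

theorem isBoundedBilinearMap_matrix_mul :
    IsBoundedBilinearMap 𝕜 (fun p : Matrix l m 𝕜 × Matrix m n 𝕜 => p.1 * p.2) :=
  (mulLinearMap 𝕜 : Matrix l m 𝕜 →ₗ[𝕜] Matrix m n 𝕜 →ₗ[𝕜] Matrix l n 𝕜)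
    |>.toContinuousBilinearMap.isBoundedBilinearMap

/- The sup norm on matrices is not submultiplicative, so the product rule for normed algebras is
unavailable and the product is differentiated as a bounded bilinear map. -/
theorem fderiv_matrix_mul_apply {f : E → Matrix l m 𝕜} {g : E → Matrix m n 𝕜} {x : E}
    (hf : DifferentiableAt 𝕜 f x) (hg : DifferentiableAt 𝕜 g x) (v : E) :
    fderiv 𝕜 (fun y => f y * g y) x v = f x * fderiv 𝕜 g x v + fderiv 𝕜 f x v * g x := by
  have h := (isBoundedBilinearMap_matrix_mul.hasFDerivAt (f x, g x)).comp x
    (hf.hasFDerivAt.prodMk hg.hasFDerivAt)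
  simp only [Function.comp_def] at h
  refine congr($(h.fderiv) v).trans ?_
  rw [ContinuousLinearMap.comp_apply, IsBoundedBilinearMap.deriv_apply]
  rfl

theorem mul_fderiv_eq_fderiv_neg_mul [DecidableEq m] {τ : E → Matrix m m 𝕜} {ξ : E}
    (hξ : DifferentiableAt 𝕜 τ ξ) (hnegξ : DifferentiableAt 𝕜 τ (-ξ))
    (hτinv : ∀ η, τ (-η) * τ η = 1) (v : E) :
    τ (-ξ) * fderiv 𝕜 τ ξ v = fderiv 𝕜 τ (-ξ) v * τ ξ := by
  have hconst : fderiv 𝕜 (fun η => τ (-η) * τ η) ξ v = 0 := by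
    simp [show (fun η => τ (-η) * τ η) = fun _ => 1 from funext hτinv]
  have hneg : DifferentiableAt 𝕜 (fun η => τ (-η)) ξ := hnegξ.comp ξ differentiableAt_id.neg
  -- The type is spelled out so that `fderiv` elaborates with `Matrix.addCommGroup`, as in
  -- `hconst`; `rw` does not identify it with the instance coming from the norm.
  have hneg_deriv : fderiv 𝕜 (fun η => τ (-η)) ξ v = -fderiv 𝕜 τ (-ξ) v :=
    fderiv_comp_neg_apply hnegξ v
  rwa [fderiv_matrix_mul_apply hneg hξ, hneg_deriv, neg_mul, ← sub_eq_add_neg, sub_eq_zero]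
    at hconst

end MatrixCalculus

theorem AdL_comp_dtauL_neg {n : ℕ} {τ : Matrix (Fin n) (Fin n) ℝ → Matrix (Fin n) (Fin n) ℝ}
    {ξ : Matrix (Fin n) (Fin n) ℝ} (hξ : DifferentiableAt ℝ τ ξ)
    (hnegξ : DifferentiableAt ℝ τ (-ξ)) (hτinv : ∀ η, τ (-η) * τ η = 1) :
    AdL (τ ξ) ∘ₗ dtauL τ (-ξ) = dtauL τ ξ := by
  have hinv : (τ ξ)⁻¹ = τ (-ξ) := inv_eq_left_inv (hτinv ξ)
  have hinv_neg : (τ (-ξ))⁻¹ = τ ξ := inv_eq_right_inv (hτinv ξ)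
  have hright : τ ξ * τ (-ξ) = 1 := mul_eq_one_comm.mp (hτinv ξ)
  ext1 v
  have hkey : τ (-ξ) * fderiv ℝ τ ξ v = fderiv ℝ τ (-ξ) v * τ ξ :=
    mul_fderiv_eq_fderiv_neg_mul hξ hnegξ hτinv v
  simp only [AdL, dtauL, LinearMap.comp_apply, LinearMap.mulLeft_apply, LinearMap.mulRight_apply,
    ContinuousLinearMap.coe_coe, hinv, hinv_neg]
  calc τ ξ * (fderiv ℝ τ (-ξ) v * τ ξ * τ (-ξ))
      = τ ξ * (fderiv ℝ τ (-ξ) v * τ ξ) * τ (-ξ) := by noncomm_ring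
    _ = τ ξ * (τ (-ξ) * fderiv ℝ τ ξ v) * τ (-ξ) := by rw [hkey]
    _ = fderiv ℝ τ ξ v * τ (-ξ) := by rw [← Matrix.mul_assoc, hright, Matrix.one_mul]

theorem stmt1_general {n : ℕ} (τ : Matrix (Fin n) (Fin n) ℝ → Matrix (Fin n) (Fin n) ℝ)
    (hτ : Differentiable ℝ τ)
    (hτinv : ∀ η, τ (-η) * τ η = 1)
    (ξ : Matrix (Fin n) (Fin n) ℝ)
    (e : Matrix (Fin n) (Fin n) ℝ ≃ₗ[ℝ] Matrix (Fin n) (Fin n) ℝ)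
    (he : (e : Matrix (Fin n) (Fin n) ℝ →ₗ[ℝ] Matrix (Fin n) (Fin n) ℝ) = dtauL τ (-ξ)) :
    (AdL (τ ξ)).dualMap
      = ((e.symm : Matrix (Fin n) (Fin n) ℝ →ₗ[ℝ] Matrix (Fin n) (Fin n) ℝ).dualMap).comp
          ((dtauL τ ξ).dualMap) := by
  have hAd : AdL (τ ξ) = dtauL τ ξ ∘ₗ e.symm := by
    rw [← AdL_comp_dtauL_neg (hτ ξ) (hτ (-ξ)) hτinv, ← he, LinearMap.comp_assoc,
      LinearEquiv.comp_coe, LinearEquiv.symm_trans_self, LinearEquiv.refl_toLinearMap,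
      LinearMap.comp_id]
  rw [hAd, LinearMap.dualMap_comp_dualMap]

/-- `Ad*_{τ(ξ)} = (dτ_{-ξ}⁻¹)* ∘ (dτ_ξ)*` as linear maps `𝔤* → 𝔤*`. -/
theorem stmt1 {n : ℕ} (τ : Matrix (Fin n) (Fin n) ℝ → Matrix (Fin n) (Fin n) ℝ)
    (hτ : Differentiable ℝ τ) (h0 : τ 0 = 1)
    (hτinv : ∀ η, τ (-η) * τ η = 1)
    (ξ : Matrix (Fin n) (Fin n) ℝ)
    (e : Matrix (Fin n) (Fin n) ℝ ≃ₗ[ℝ] Matrix (Fin n) (Fin n) ℝ)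
    (he : (e : Matrix (Fin n) (Fin n) ℝ →ₗ[ℝ] Matrix (Fin n) (Fin n) ℝ) = dtauL τ (-ξ)) :
    (AdL (τ ξ)).dualMap
      = ((e.symm : Matrix (Fin n) (Fin n) ℝ →ₗ[ℝ] Matrix (Fin n) (Fin n) ℝ).dualMap).comp
          ((dtauL τ ξ).dualMap) :=
  stmt1_general τ hτ hτinv ξ e he
end

section
/- Consider the discrete Euler–Poincaré update μ_{k+1} = (dτ^{-1}_{-hΞ_{k+1}})* (dτ_{hΞ_{k+1}})* μ_k together with the group update g_{k+1} = g_k τ(hΞ_{k+1}). Then the discrete momentum J_k := Ad*_{g_k^{-1}} μ_k is conserved: J_{k+1} = J_k for all k. -/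
/-- for the discrete Euler–Poincaré update
`μ_{k+1} = (dτ⁻¹_{-hΞ_{k+1}})* (dτ_{hΞ_{k+1}})* μ_k` together with
`g_{k+1} = g_k τ(hΞ_{k+1})`, the discrete momentum `J_k = Ad*_{g_k⁻¹} μ_k` is conserved.
Here `D ξ = dτ_ξ` and `Dinv ξ = dτ_ξ⁻¹`, and the identity
`Ad*_{τ(ξ)} = (dτ⁻¹_{-ξ})* ∘ (dτ_ξ)*` holds. -/
theorem stmt11 {G : Type*} [Group G] {𝔤 : Type*} [AddCommGroup 𝔤] [Module ℝ 𝔤]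
    (Ad : G →* (𝔤 →ₗ[ℝ] 𝔤)) (τ : 𝔤 → G) (D Dinv : 𝔤 → (𝔤 →ₗ[ℝ] 𝔤))
    (hτ0 : τ 0 = 1) (hτinv : ∀ η, τ (-η) * τ η = 1)
    (hDinv : ∀ ξ, (Dinv ξ).comp (D ξ) = LinearMap.id ∧ (D ξ).comp (Dinv ξ) = LinearMap.id)
    (hAd : ∀ ξ : 𝔤, (Ad (τ ξ)).dualMap = ((Dinv (-ξ)).dualMap).comp ((D ξ).dualMap))
    (h : ℝ) (hh : 0 < h)
    (g : ℕ → G) (Ξ : ℕ → 𝔤) (μ : ℕ → Module.Dual ℝ 𝔤)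
    (hμ : ∀ k, μ (k + 1)
      = (((Dinv (-(h • Ξ (k + 1)))).dualMap).comp ((D (h • Ξ (k + 1))).dualMap)) (μ k))
    (hg : ∀ k, g (k + 1) = g k * τ (h • Ξ (k + 1))) :
    ∀ k, (Ad (g (k + 1))⁻¹).dualMap (μ (k + 1)) = (Ad (g k)⁻¹).dualMap (μ k) := by
  intro k
  set ξ := h • Ξ (k + 1) with hξ
  have e1 : μ (k + 1) = (Ad (τ ξ)).dualMap (μ k) := by
    rw [hμ, ← hAd]
  rw [hg, e1, mul_inv_rev, map_mul]
  show (((Ad (τ ξ)⁻¹) * (Ad (g k)⁻¹)).dualMap) ((Ad (τ ξ)).dualMap (μ k)) = _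
  have hmul : ((Ad (τ ξ)⁻¹) * (Ad (g k)⁻¹)) = ((Ad (τ ξ)⁻¹) : 𝔤 →ₗ[ℝ] 𝔤).comp (Ad (g k)⁻¹) := rfl
  rw [hmul, ← LinearMap.dualMap_comp_dualMap]
  show (Ad (g k)⁻¹).dualMap (((Ad (τ ξ)⁻¹) : 𝔤 →ₗ[ℝ] 𝔤).dualMap ((Ad (τ ξ)).dualMap (μ k))) = _
  congr 1
  have : ((Ad (τ ξ)⁻¹) : 𝔤 →ₗ[ℝ] 𝔤).dualMap ∘ₗ (Ad (τ ξ)).dualMap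
      = ((Ad (τ ξ)) ∘ₗ (Ad (τ ξ)⁻¹)).dualMap := (LinearMap.dualMap_comp_dualMap _ _).symm
  have h2 : ((Ad (τ ξ)) ∘ₗ (Ad (τ ξ)⁻¹)) = LinearMap.id := by
    show (Ad (τ ξ)) * (Ad (τ ξ)⁻¹) = _
    rw [← map_mul, mul_inv_cancel, map_one]; rfl
  calc ((Ad (τ ξ)⁻¹) : 𝔤 →ₗ[ℝ] 𝔤).dualMap ((Ad (τ ξ)).dualMap (μ k))
      = (((Ad (τ ξ)⁻¹) : 𝔤 →ₗ[ℝ] 𝔤).dualMap ∘ₗ (Ad (τ ξ)).dualMap) (μ k) := rfl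
    _ = ((Ad (τ ξ)) ∘ₗ (Ad (τ ξ)⁻¹)).dualMap (μ k) := by rw [this]
    _ = μ k := by rw [h2, LinearMap.dualMap_id]; rfl
end

section
/- For a solution ξ of the NHP equation ξ⃛ = ξ̈ × ξ on ℝ³ and a curve g: ℝ → SO(3) with g^{-1}ġ = ξ^ (hat map), the vector J(t) := g(t)·(-ξ̈(t)) ∈ ℝ³ is constant in time. -/
/-!
The NHP equation says that the body momentum `μ = -ξ̈` obeys the coadjoint equation
`μ̇ = μ × ξ`. Since `ġ = g ξ^` and `ξ^ v = ξ × v`, the product rule gives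
`d/dt (g μ) = g (ξ × μ + μ × ξ) = 0`, so `J = g μ` is constant.
-/

open Matrix

attribute [local instance] Matrix.normedAddCommGroup Matrix.normedSpace

/-- The hat map `ℝ³ → 𝔰𝔬(3)`. -/
def hat (ξ : Fin 3 → ℝ) : Matrix (Fin 3) (Fin 3) ℝ :=
  !![0, -ξ 2, ξ 1; ξ 2, 0, -ξ 0; -ξ 1, ξ 0, 0]

theorem hat_mulVec (ξ v : Fin 3 → ℝ) : hat ξ *ᵥ v = ξ ⨯₃ v := by
  ext i
  fin_cases i <;> simp [hat, mulVec, dotProduct, Fin.sum_univ_three, cross_apply] <;> ring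

theorem HasDerivAt.matrix_mulVec {𝕜 : Type*} [NontriviallyNormedField 𝕜] {m n : Type*}
    [Fintype m] [Fintype n] {A : 𝕜 → Matrix m n 𝕜} {v : 𝕜 → n → 𝕜} {A' : Matrix m n 𝕜}
    {v' : n → 𝕜} {t : 𝕜} (hA : HasDerivAt A A' t) (hv : HasDerivAt v v' t) :
    HasDerivAt (fun s => A s *ᵥ v s) (A' *ᵥ v t + A t *ᵥ v') t := by
  refine hasDerivAt_pi.2 fun i => ?_
  simp only [mulVec, dotProduct, Pi.add_apply, ← Finset.sum_add_distrib]
  exact HasDerivAt.fun_sum fun j _ =>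
    (hasDerivAt_pi.1 (hasDerivAt_pi.1 hA i) j).mul (hasDerivAt_pi.1 hv j)

theorem mulVec_eq_of_hasDerivAt_coadjoint {g : ℝ → Matrix (Fin 3) (Fin 3) ℝ}
    {ξ μ μ' : ℝ → Fin 3 → ℝ} (hg : ∀ t, HasDerivAt g (g t * hat (ξ t)) t)
    (hμ : ∀ t, HasDerivAt μ (μ' t) t) (hcoad : ∀ t, μ' t = μ t ⨯₃ ξ t) (s t : ℝ) :
    g s *ᵥ μ s = g t *ᵥ μ t := by
  have hJ : ∀ t, HasDerivAt (fun t => g t *ᵥ μ t) 0 t := fun t => by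
    convert (hg t).matrix_mulVec (hμ t) using 1
    rw [← mulVec_mulVec, hat_mulVec, hcoad, ← mulVec_add, cross_anticomm', mulVec_zero]
  exact is_const_of_deriv_eq_zero (fun t => (hJ t).differentiableAt) (fun t => (hJ t).deriv) s t

theorem stmt13_general (ξ ξ'' ξ''' : ℝ → Fin 3 → ℝ) (g : ℝ → Matrix (Fin 3) (Fin 3) ℝ)
    (hg : ∀ t, HasDerivAt g (g t * hat (ξ t)) t)
    (h3 : ∀ t, HasDerivAt ξ'' (ξ''' t) t)
    (hNHP : ∀ t, ξ''' t = crossProduct (ξ'' t) (ξ t)) :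
    ∀ s t : ℝ, (g s).mulVec (-(ξ'' s)) = (g t).mulVec (-(ξ'' t)) :=
  mulVec_eq_of_hasDerivAt_coadjoint hg (fun t => (h3 t).neg) fun t => by
    rw [hNHP, map_neg, LinearMap.neg_apply]

/-- for a solution `ξ` of the NHP equation `ξ⃛ = ξ̈ × ξ` and a curve
`g : ℝ → SO(3)` with `g⁻¹ġ = ξ^`, the spatial momentum `J(t) = g(t)·(-ξ̈(t))` is constant. -/
theorem stmt13 (ξ ξ' ξ'' ξ''' : ℝ → Fin 3 → ℝ) (g : ℝ → Matrix (Fin 3) (Fin 3) ℝ)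
    (hSO : ∀ t, (g t)ᵀ * g t = 1 ∧ (g t).det = 1)
    (hg : ∀ t, HasDerivAt g (g t * hat (ξ t)) t)
    (h1 : ∀ t, HasDerivAt ξ (ξ' t) t)
    (h2 : ∀ t, HasDerivAt ξ' (ξ'' t) t)
    (h3 : ∀ t, HasDerivAt ξ'' (ξ''' t) t)
    (hNHP : ∀ t, ξ''' t = crossProduct (ξ'' t) (ξ t)) :
    ∀ s t : ℝ, (g s).mulVec (-(ξ'' s)) = (g t).mulVec (-(ξ'' t)) :=
  stmt13_general ξ ξ'' ξ''' g hg h3 hNHP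
end

section
/- Consider the one-stage implicit-Euler HOHP scheme for Riemannian cubics with bi-invariant metric: μ_{k+1} = (dτ^{-1}_{-hξ_{k+1}})*(dτ_{hξ_{k+1}})* μ_k, ν_{k+1} = ν_k - h(dτ_{-hξ_{k+1}})* μ_{k+1}, g_{k+1} = g_k τ(hξ_{k+1}), ξ_{k+1} = ξ_k + h ν_k^♯. This scheme is explicit: given (g_k, ξ_k, μ_k, ν_k), the values (g_{k+1}, ξ_{k+1}, μ_{k+1}, ν_{k+1}) are uniquely determined, defining a map F: G × 𝔤 × 𝔤* × 𝔤* → G × 𝔤 × 𝔤* × 𝔤* that preserves the momentum J(g,ξ,μ,ν) = Ad*_{g^{-1}}μ. -/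
/-- the one-stage implicit-Euler HOHP scheme for Riemannian cubics with a
bi-invariant metric,
`ξ₊ = ξ + h ν^♯`, `g₊ = g τ(hξ₊)`, `μ₊ = (dτ⁻¹_{-hξ₊})*(dτ_{hξ₊})* μ`,
`ν₊ = ν - h (dτ_{-hξ₊})* μ₊`, is explicit: the new state is uniquely determined, defining a
flow map on `G × 𝔤 × 𝔤* × 𝔤*` that preserves the momentum `J(g,ξ,μ,ν) = Ad*_{g⁻¹} μ`.
Here `D ξ = dτ_ξ`, `Dinv ξ = dτ_ξ⁻¹`, `♯` is the inverse of `InnerProductSpace.toDual`,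
and the identity `Ad*_{τ(ξ)} = (dτ⁻¹_{-ξ})*(dτ_ξ)*` holds. -/
theorem stmt17 {G : Type*} [Group G]
    {𝔤 : Type*} [NormedAddCommGroup 𝔤] [InnerProductSpace ℝ 𝔤] [CompleteSpace 𝔤]
    (Ad : G →* (𝔤 →L[ℝ] 𝔤)) (τ : 𝔤 → G) (D Dinv : 𝔤 → (𝔤 →L[ℝ] 𝔤))
    (hτ0 : τ 0 = 1) (hτinv : ∀ η : 𝔤, τ (-η) * τ η = 1)
    (hDinv : ∀ ξ : 𝔤, (Dinv ξ).comp (D ξ) = ContinuousLinearMap.id ℝ 𝔤 ∧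
      (D ξ).comp (Dinv ξ) = ContinuousLinearMap.id ℝ 𝔤)
    (hAd : ∀ (ξ : 𝔤) (μ : 𝔤 →L[ℝ] ℝ),
      μ.comp (Ad (τ ξ)) = (μ.comp (D ξ)).comp (Dinv (-ξ)))
    (h : ℝ) (hh : 0 < h)
    (g : G) (ξ : 𝔤) (μ ν : 𝔤 →L[ℝ] ℝ) :
    (∃! q : G × 𝔤 × (𝔤 →L[ℝ] ℝ) × (𝔤 →L[ℝ] ℝ),
      q.2.1 = ξ + h • (InnerProductSpace.toDual ℝ 𝔤).symm ν ∧
      q.1 = g * τ (h • q.2.1) ∧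
      q.2.2.1 = (μ.comp (D (h • q.2.1))).comp (Dinv (-(h • q.2.1))) ∧
      q.2.2.2 = ν - h • (q.2.2.1.comp (D (-(h • q.2.1))))) ∧
    (∀ q : G × 𝔤 × (𝔤 →L[ℝ] ℝ) × (𝔤 →L[ℝ] ℝ),
      (q.2.1 = ξ + h • (InnerProductSpace.toDual ℝ 𝔤).symm ν ∧
       q.1 = g * τ (h • q.2.1) ∧
       q.2.2.1 = (μ.comp (D (h • q.2.1))).comp (Dinv (-(h • q.2.1))) ∧
       q.2.2.2 = ν - h • (q.2.2.1.comp (D (-(h • q.2.1))))) →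
      q.2.2.1.comp (Ad q.1⁻¹) = μ.comp (Ad g⁻¹)) := by
  constructor
  · set ξ' := ξ + h • (InnerProductSpace.toDual ℝ 𝔤).symm ν with hξ'
    set μ' := (μ.comp (D (h • ξ'))).comp (Dinv (-(h • ξ'))) with hμ'
    refine ⟨(g * τ (h • ξ'), ξ', μ', ν - h • (μ'.comp (D (-(h • ξ'))))),
      ⟨rfl, rfl, rfl, rfl⟩, ?_⟩
    rintro ⟨a, b, c, d⟩ ⟨h1, h2, h3, h4⟩
    simp only at h1 h2 h3 h4
    subst h1; subst h2; subst h3; subst h4; rfl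
  · rintro ⟨a, b, c, d⟩ ⟨h1, h2, h3, h4⟩
    simp only at h1 h2 h3 h4 ⊢
    rw [h3, ← hAd, h2, ContinuousLinearMap.comp_assoc]
    show μ.comp (Ad (τ (h • b)) * Ad (g * τ (h • b))⁻¹) = _
    rw [← map_mul]
    congr 2
    group
end
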